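/- Let w ≥ 0 be an integer. In the formal power series ring ℤ[q][[t]], the generating function of secant-type path diagrams bounded in a slit of width w equals the finite continued fraction G'_w(t,q): that is, Σ_{N=0}^∞ t^{2N} · Σ_u Σ_s q^{weight(s)} = G'_w(t,q), where the middle sum runs over all Dyck paths u of half-length N with height at most w and the inner sum runs over all secant-type path diagrams s on u. -/

import Mathlib

/-!
STATEMENT 1: the generating function of secant-type path diagrams bounded in a
slit of width `w` equals the finite continued fraction `G'_w(t,q)` in `ℤ[q][[t]]`.
-/

open Finset

/-- The `q`-integer `[n]_q = 1 + q + ⋯ + q^{n-1}` in `ℤ[q]`. -/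
noncomputable def qInt (n : ℕ) : Polynomial ℤ := ∑ i ∈ Finset.range n, Polynomial.X ^ i

/-- A step, encoded by a Boolean: `true` is a `+1` (northeast) step, `false` a `-1`
(southeast) step. -/
def stepVal (b : Bool) : ℤ := if b then 1 else -1

/-- The partial sum `u_1 + ⋯ + u_j` of the first `j` steps; `psum u j` is the
starting height of step `j+1`. -/
def psum {n : ℕ} (u : Fin n → Bool) (j : ℕ) : ℤ :=
  ∑ i ∈ Finset.univ.filter (fun i : Fin n => (i : ℕ) < j), stepVal (u i)

/-- `u` is a Dyck path of half-length `N` whose height is at most `w`: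
all partial sums are nonnegative, the total sum is `0`, and all partial sums are `≤ w`. -/
def IsDyckLe (N w : ℕ) (u : Fin (2 * N) → Bool) : Prop :=
  (∀ j ≤ 2 * N, 0 ≤ psum u j) ∧ psum u (2 * N) = 0 ∧ (∀ j ≤ 2 * N, psum u j ≤ (w : ℤ))

/-- `s` is a secant-type path diagram on the Dyck path `u`: `0 ≤ s_j ≤ h_j` if step `j`
goes up, and `0 ≤ s_j ≤ h_j - 1` if step `j` goes down (the upper bound `2N` on the
codomain of `s` is harmless since `h_j ≤ 2N`). -/
def IsSecantDiagram {N : ℕ} (u : Fin (2 * N) → Bool) (s : Fin (2 * N) → Fin (2 * N + 1)) :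
    Prop :=
  ∀ j : Fin (2 * N),
    if u j then ((s j : ℕ) : ℤ) ≤ psum u (j : ℕ) else ((s j : ℕ) : ℤ) ≤ psum u (j : ℕ) - 1

open scoped Classical in
/-- The generating function `Σ_N t^{2N} Σ_u Σ_s q^{weight(s)} ∈ ℤ[q][[t]]`, where `u` runs
over Dyck paths of half-length `N` of height at most `w` and `s` over secant-type path
diagrams on `u`. -/
noncomputable def secantGF (w : ℕ) : PowerSeries (Polynomial ℤ) :=
  PowerSeries.mk fun n =>
    if n % 2 = 0 then
      ∑ p ∈ Finset.univ.filter
          (fun p : (Fin (2 * (n / 2)) → Bool) × (Fin (2 * (n / 2)) → Fin (2 * (n / 2) + 1)) =>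
            IsDyckLe (n / 2) w p.1 ∧ IsSecantDiagram p.1 p.2),
        Polynomial.X ^ (∑ j, (p.2 j : ℕ))
    else 0

/-- `hAux' w k` is the continued-fraction level `h_{w+1-k}`:
`h_{w+1} = 1` and `h_j = 1 - [j]_q² t² / h_{j+1}` for `1 ≤ j ≤ w`. -/
noncomputable def hAux' (w : ℕ) : ℕ → PowerSeries (Polynomial ℤ)
  | 0 => 1
  | k + 1 => 1 - PowerSeries.C (qInt (w - k) ^ 2) *
      PowerSeries.X ^ 2 * Ring.inverse (hAux' w k)

/-- The finite continued fraction `G'_w(t,q) = 1 / h_1 ∈ ℤ[q][[t]]`. -/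
noncomputable def Gcf' (w : ℕ) : PowerSeries (Polynomial ℤ) := Ring.inverse (hAux' w w)

/-!
Summing `q ^ weight` over the secant-type diagrams on a fixed path gives the product of
`[h_j + 1]_q` over its up steps and `[h_j]_q` over its down steps. Let `V_h` be the generating
function of such weighted walks from height `h` down to `0` inside the slit `[0, w]`. Splitting
off the first step gives `V_h = [h = 0] + t ([h + 1]_q V_{h+1} + [h]_q V_{h-1})` for
`0 ≤ h ≤ w`, and `V_{w+1} = 0`. Descending from `h = w`, this turns into
`h_{h+1} V_h = [h = 0] + t [h]_q V_{h-1}`, which at `h = 0` reads `h_1 V_0 = 1`.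
-/

namespace SecantDiagram

open PowerSeries

lemma forall_le_succ_iff {P : ℕ → Prop} {n : ℕ} :
    (∀ j ≤ n + 1, P j) ↔ P 0 ∧ ∀ j ≤ n, P (j + 1) := by
  refine ⟨fun hP => ⟨hP 0 (Nat.zero_le _), fun j hj => hP (j + 1) (by omega)⟩, ?_⟩
  rintro ⟨h0, hP⟩ (_ | j) hj
  exacts [h0, hP j (by omega)]

lemma psum_zero {n : ℕ} (u : Fin n → Bool) : psum u 0 = 0 := by
  simp [psum]

lemma psum_cons {n : ℕ} (b : Bool) (u : Fin n → Bool) (j : ℕ) :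
    psum (Fin.cons b u : Fin (n + 1) → Bool) (j + 1) = stepVal b + psum u j := by
  simp only [psum, Finset.sum_filter, Fin.sum_univ_succ, Fin.cons_zero, Fin.cons_succ,
    Fin.val_zero, Fin.val_succ, Nat.succ_lt_succ_iff, Nat.zero_lt_succ, if_true]

lemma psum_le_length {n : ℕ} (u : Fin n → Bool) (j : ℕ) : psum u j ≤ n := by
  calc psum u j ≤ #(univ.filter fun i : Fin n => (i : ℕ) < j) • (1 : ℤ) :=
        Finset.sum_le_card_nsmul _ _ _ fun i _ => by cases u i <;> simp [stepVal]
    _ ≤ n := by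
        simpa using card_le_card (filter_subset (fun i : Fin n => (i : ℕ) < j) univ)

def IsSlitWalk (w : ℕ) (h : ℤ) {n : ℕ} (u : Fin n → Bool) : Prop :=
  (∀ j ≤ n, 0 ≤ h + psum u j) ∧ h + psum u n = 0 ∧ (∀ j ≤ n, h + psum u j ≤ w)

lemma isSlitWalk_nil_iff (w : ℕ) (h : ℤ) (u : Fin 0 → Bool) : IsSlitWalk w h u ↔ h = 0 := by
  simp only [IsSlitWalk, Nat.le_zero, forall_eq, psum_zero, add_zero]
  constructor
  · exact fun h => h.2.1
  · rintro rfl; simp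

lemma isSlitWalk_cons_iff (w : ℕ) (h : ℤ) (b : Bool) {n : ℕ} (u : Fin n → Bool) :
    IsSlitWalk w h (Fin.cons b u : Fin (n + 1) → Bool) ↔
      (0 ≤ h ∧ h ≤ w) ∧ IsSlitWalk w (h + stepVal b) u := by
  simp only [IsSlitWalk, forall_le_succ_iff, psum_cons, psum_zero, add_zero, ← add_assoc]
  tauto

def secantLabelCount (h : ℤ) (b : Bool) : ℕ := h.toNat + if b then 1 else 0

noncomputable def walkWeight (h : ℤ) {n : ℕ} (u : Fin n → Bool) : Polynomial ℤ :=
  ∏ j : Fin n, qInt (secantLabelCount (h + psum u j) (u j))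

lemma walkWeight_cons (h : ℤ) (b : Bool) {n : ℕ} (u : Fin n → Bool) :
    walkWeight h (Fin.cons b u : Fin (n + 1) → Bool) =
      qInt (secantLabelCount h b) * walkWeight (h + stepVal b) u := by
  simp only [walkWeight, Fin.prod_univ_succ, Fin.cons_zero, Fin.cons_succ, Fin.val_zero,
    Fin.val_succ, psum_zero, add_zero, psum_cons, add_assoc]

open scoped Classical in
noncomputable def walkPoly (w : ℕ) (h : ℤ) (n : ℕ) : Polynomial ℤ :=
  ∑ u ∈ univ.filter (fun u : Fin n → Bool => IsSlitWalk w h u), walkWeight h u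

lemma walkPoly_zero (w : ℕ) (h : ℤ) : walkPoly w h 0 = if h = 0 then 1 else 0 := by
  classical
  simp only [walkPoly, isSlitWalk_nil_iff, walkWeight, univ_eq_empty, prod_empty,
    sum_const, nsmul_eq_mul, mul_one]
  split_ifs <;> simp [*]

lemma walkPoly_succ (w : ℕ) (h : ℤ) (n : ℕ) :
    walkPoly w h (n + 1) = if 0 ≤ h ∧ h ≤ w then
      ∑ b : Bool, qInt (secantLabelCount h b) * walkPoly w (h + stepVal b) n else 0 := by
  classical
  rw [walkPoly, sum_filter, ← (Fin.consEquiv fun _ => Bool).sum_comp, Fintype.sum_prod_type]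
  have hcons (b : Bool) (u : Fin n → Bool) :
      Fin.consEquiv (fun _ => Bool) (b, u) = Fin.cons b u := rfl
  simp only [hcons, isSlitWalk_cons_iff, walkWeight_cons, ite_and]
  split_ifs
  · simp only [walkPoly, sum_filter, mul_sum, mul_ite, mul_zero]
  all_goals simp

lemma walkPoly_eq_zero_of_odd (w n : ℕ) : ∀ h : ℤ, Odd (h + n) → walkPoly w h n = 0 := by
  induction n with
  | zero => intro h hodd; rw [walkPoly_zero, if_neg (by rintro rfl; simp at hodd)]
  | succ n ih =>
    intro h hodd
    rw [walkPoly_succ]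
    split_ifs
    · refine sum_eq_zero fun b _ => ?_
      rw [ih, mul_zero]
      rw [Int.odd_iff] at hodd ⊢
      push_cast at hodd
      cases b <;> simp only [stepVal] <;> omega
    · rfl

noncomputable def walkGF (w : ℕ) (h : ℤ) : PowerSeries (Polynomial ℤ) := mk (walkPoly w h)

lemma walkGF_of_lt (w : ℕ) {h : ℤ} (hh : w < h) : walkGF w h = 0 := by
  refine PowerSeries.ext fun n => ?_
  cases n
  · simp [walkGF, walkPoly_zero]; omega
  · simp [walkGF, walkPoly_succ]; omega

lemma walkGF_eq_first_step (w j : ℕ) (hj : j ≤ w) :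
    walkGF w j = (if j = 0 then 1 else 0) +
      X * (C (qInt (j + 1)) * walkGF w (j + 1) + C (qInt j) * walkGF w (j - 1)) := by
  refine PowerSeries.ext fun n => ?_
  cases n with
  | zero => simp [walkGF, walkPoly_zero]
  | succ n =>
    have hconst : coeff (n + 1) (if j = 0 then 1 else 0 : PowerSeries (Polynomial ℤ)) = 0 := by
      split_ifs <;> simp [coeff_one]
    rw [map_add, hconst, zero_add, coeff_succ_X_mul, map_add, coeff_C_mul, coeff_C_mul]
    simp [walkGF, walkPoly_succ, hj, secantLabelCount, stepVal, sub_eq_add_neg]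

lemma constantCoeff_hAux' (w k : ℕ) : constantCoeff (hAux' w k) = 1 := by
  cases k <;> simp [hAux']

lemma isUnit_hAux' (w k : ℕ) : IsUnit (hAux' w k) :=
  isUnit_iff_constantCoeff.mpr (by rw [constantCoeff_hAux']; exact isUnit_one)

-- At `k = w` the last term vanishes because `qInt 0 = 0`.
lemma hAux'_mul_walkGF (w : ℕ) {k : ℕ} (hk : k ≤ w) :
    hAux' w k * walkGF w (w - k : ℕ) =
      (if w - k = 0 then 1 else 0) + X * C (qInt (w - k)) * walkGF w ((w - k : ℕ) - 1) := by
  induction k with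
  | zero =>
    rw [hAux', one_mul, Nat.sub_zero, walkGF_eq_first_step w w le_rfl,
      walkGF_of_lt w (by omega : (w : ℤ) < w + 1)]
    ring
  | succ k ih =>
    obtain ⟨h, hwk⟩ : ∃ h, w - k = h + 1 := ⟨w - k - 1, by omega⟩
    have hwk' : w - (k + 1) = h := by omega
    have ih' := ih (by omega)
    simp only [hwk, Nat.add_eq_zero_iff, one_ne_zero, and_false, if_false, zero_add,
      Nat.cast_add, Nat.cast_one, add_sub_cancel_right] at ih'
    have hrec := walkGF_eq_first_step w h (by omega)
    have hinv := Ring.inverse_mul_cancel _ (isUnit_hAux' w k)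
    rw [hAux', hwk, hwk', map_pow]
    linear_combination hrec + C (qInt (h + 1)) * X * Ring.inverse (hAux' w k) * ih'
      - X * C (qInt (h + 1)) * walkGF w (h + 1) * hinv

lemma walkGF_zero_eq_Gcf' (w : ℕ) : walkGF w 0 = Gcf' w := by
  have h := hAux'_mul_walkGF w le_rfl
  simp only [Nat.sub_self, if_true, qInt, range_zero, sum_empty, map_zero, mul_zero, zero_mul,
    add_zero, Nat.cast_zero] at h
  rw [Gcf', ← mul_one (Ring.inverse _), eq_comm,
    Ring.inverse_mul_eq_iff_eq_mul _ _ _ (isUnit_hAux' w w), h]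

lemma sum_fin_lt_pow_eq_qInt {M b : ℕ} (hb : b ≤ M + 1) :
    ∑ k ∈ univ.filter (fun k : Fin (M + 1) => (k : ℕ) < b),
      (Polynomial.X : Polynomial ℤ) ^ (k : ℕ) = qInt b := by
  rw [sum_filter, Fin.sum_univ_eq_sum_range (fun k => if k < b then Polynomial.X ^ k else 0),
    ← sum_filter, qInt]
  congr 1
  ext k
  simp only [mem_filter, mem_range]
  omega

lemma sum_pow_sum_eq_prod_qInt {ι : Type*} [Fintype ι] [DecidableEq ι] {M : ℕ} (b : ι → ℕ)
    (hb : ∀ i, b i ≤ M + 1) :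
    ∑ s ∈ univ.filter (fun s : ι → Fin (M + 1) => ∀ i, (s i : ℕ) < b i),
      (Polynomial.X : Polynomial ℤ) ^ (∑ i, (s i : ℕ)) = ∏ i, qInt (b i) := by
  have hpi : univ.filter (fun s : ι → Fin (M + 1) => ∀ i, (s i : ℕ) < b i) =
      Fintype.piFinset fun i => univ.filter fun k : Fin (M + 1) => (k : ℕ) < b i := by
    ext s
    simp
  simp_rw [hpi, ← sum_fin_lt_pow_eq_qInt (hb _), prod_univ_sum, prod_pow_eq_pow_sum]

lemma isSecantDiagram_iff {N : ℕ} {u : Fin (2 * N) → Bool} (hu : ∀ j ≤ 2 * N, 0 ≤ psum u j)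
    (s : Fin (2 * N) → Fin (2 * N + 1)) :
    IsSecantDiagram u s ↔ ∀ j, (s j : ℕ) < secantLabelCount (0 + psum u j) (u j) := by
  refine forall_congr' fun j => ?_
  have := hu j j.is_le'
  cases u j <;> simp [secantLabelCount]; omega

open scoped Classical in
lemma sum_secantDiagram_eq_walkWeight {N : ℕ} {u : Fin (2 * N) → Bool}
    (hu : ∀ j ≤ 2 * N, 0 ≤ psum u j) :
    ∑ s ∈ univ.filter (fun s => IsSecantDiagram u s),
      (Polynomial.X : Polynomial ℤ) ^ (∑ j, (s j : ℕ)) = walkWeight 0 u := by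
  rw [filter_congr (p := fun s => IsSecantDiagram u s) fun s _ => isSecantDiagram_iff hu s,
    walkWeight]
  convert sum_pow_sum_eq_prod_qInt (fun j : Fin (2 * N) => secantLabelCount (0 + psum u j) (u j))
    fun j => ?_
  have := psum_le_length u j
  have := hu j j.is_le'
  cases u j <;> simp [secantLabelCount] <;> omega

lemma isSlitWalk_zero_iff_isDyckLe (N w : ℕ) (u : Fin (2 * N) → Bool) :
    IsSlitWalk w 0 u ↔ IsDyckLe N w u := by
  simp only [IsSlitWalk, IsDyckLe, zero_add]

open scoped Classical in
lemma sum_dyckPath_secantDiagram_eq_walkPoly (N w : ℕ) :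
    ∑ p ∈ univ.filter (fun p : (Fin (2 * N) → Bool) × (Fin (2 * N) → Fin (2 * N + 1)) =>
        IsDyckLe N w p.1 ∧ IsSecantDiagram p.1 p.2),
      (Polynomial.X : Polynomial ℤ) ^ (∑ j, (p.2 j : ℕ)) = walkPoly w 0 (2 * N) := by
  rw [sum_filter, Fintype.sum_prod_type, walkPoly, sum_filter]
  refine sum_congr rfl fun u _ => ?_
  by_cases hu : IsDyckLe N w u
  · rw [if_pos ((isSlitWalk_zero_iff_isDyckLe N w u).mpr hu),
      ← sum_secantDiagram_eq_walkWeight hu.1, sum_filter]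
    simp only [hu, true_and]
  · rw [if_neg (mt (isSlitWalk_zero_iff_isDyckLe N w u).mp hu)]
    simp [hu]

end SecantDiagram

open SecantDiagram in
/-- For every integer `w ≥ 0`, the generating function of secant-type path diagrams in a
slit of width `w` equals the finite continued fraction `G'_w(t,q)`. -/
theorem secant_pathDiagrams_eq_continuedFraction (w : ℕ) :
    secantGF w = Gcf' w := by
  rw [← walkGF_zero_eq_Gcf']
  refine PowerSeries.ext fun n => ?_
  rw [secantGF, walkGF, PowerSeries.coeff_mk, PowerSeries.coeff_mk]
  split_ifs with hn
  · rw [sum_dyckPath_secantDiagram_eq_walkPoly, Nat.two_mul_div_two_of_even (Nat.even_iff.2 hn)]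
  · refine (walkPoly_eq_zero_of_odd w n 0 ?_).symm
    rw [zero_add, Int.odd_coe_nat, Nat.odd_iff]
    omega
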